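/- arXiv:1606.05396 — 2 statements merged into one kernel-verified Lean document; each statement's English description precedes it below -/
import Mathlib

section
/- For integers η with Γ ≤ η ≤ K-1 and real Γ ∈ (0,1], the sequence α_{b,η} = (η - Γ) / (Γ(H_K - H_η - 1) + η) is strictly increasing in η, where H_n denotes the n-th harmonic number. -/
open Finset

/-- The `n`-th harmonic number `H_n = ∑_{i=1}^n 1/i`. -/
noncomputable def H (n : ℕ) : ℝ := ∑ i ∈ Finset.range n, (1 : ℝ) / (i + 1)

/-- `α_{b,η} = (η - Γ)/(Γ(H_K - H_η - 1) + η)`. -/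
noncomputable def alphaB (K : ℕ) (Γ : ℝ) (η : ℕ) : ℝ :=
  ((η : ℝ) - Γ) / (Γ * (H K - H η - 1) + η)

lemma H_succ (n : ℕ) : H (n + 1) = H n + 1 / (n + 1) := by
  simp [H, Finset.sum_range_succ]

lemma H_strictMono : StrictMono H := by
  apply strictMono_nat_of_lt_succ
  intro n
  rw [H_succ]
  have : (0:ℝ) < 1 / (n + 1) := by positivity
  linarith

lemma denom_pos (K : ℕ) (Γ : ℝ) (hΓ0 : 0 < Γ) (η : ℕ) (hη : Γ ≤ η) (hηK : η < K) :
    0 < Γ * (H K - H η - 1) + η := by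
  have h1 : H η < H K := H_strictMono hηK
  nlinarith

lemma alphaB_step (K : ℕ) (Γ : ℝ) (hΓ0 : 0 < Γ) (hΓ1 : Γ ≤ 1) (η : ℕ)
    (hη : Γ ≤ η) (hηK : η + 1 < K) :
    alphaB K Γ η < alphaB K Γ (η + 1) := by
  have d1 : 0 < Γ * (H K - H η - 1) + η := denom_pos K Γ hΓ0 η hη (by omega)
  have hη1 : Γ ≤ ((η + 1 : ℕ) : ℝ) := by push_cast; linarith
  have d2 : 0 < Γ * (H K - H (η + 1) - 1) + (η + 1 : ℕ) := denom_pos K Γ hΓ0 (η + 1) hη1 hηK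
  have hHK : H (η + 1) < H K := H_strictMono hηK
  have hsucc : H (η + 1) = H η + 1 / (η + 1) := H_succ η
  unfold alphaB
  rw [div_lt_div_iff₀ d1 (by push_cast at d2 ⊢; linarith)]
  push_cast
  have hp : (0:ℝ) < (η : ℝ) + 1 := by positivity
  rw [hsucc] at hHK ⊢
  have key : 0 < Γ * ((H K - H η) + (η - Γ) * (1/(η+1))) := by
    apply mul_pos hΓ0
    have h2 : (0:ℝ) ≤ (η - Γ) * (1/(η+1)) := by
      apply mul_nonneg; linarith
      positivity
    have hu : (0:ℝ) < 1/((η:ℝ)+1) := by positivity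
    linarith
  nlinarith [key]

/-- For integers `η` with `Γ ≤ η ≤ K-1` and real `Γ ∈ (0,1]`, the sequence
`α_{b,η}` is strictly increasing in `η`. -/
theorem alphaB_strictMono (K : ℕ) (hK : 2 ≤ K) (Γ : ℝ) (hΓ0 : 0 < Γ) (hΓ1 : Γ ≤ 1)
    (η₁ η₂ : ℕ) (hη₁ : Γ ≤ (η₁ : ℝ)) (h12 : η₁ < η₂) (hη₂ : η₂ ≤ K - 1) :
    alphaB K Γ η₁ < alphaB K Γ η₂ := by
  induction η₂, h12 using Nat.le_induction with
  | base => exact alphaB_step K Γ hΓ0 hΓ1 η₁ hη₁ (by omega)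
  | succ n hn ih =>
    have hnK : n ≤ K - 1 := by omega
    have hΓn : Γ ≤ (n : ℝ) := le_trans hη₁ (by exact_mod_cast Nat.le_of_lt_succ (by omega))
    exact lt_trans (ih hnK) (alphaB_step K Γ hΓ0 hΓ1 n hΓn (by omega))
end

section
/- For integers η with Γ < η ≤ K-2, α ∈ [0,1), and Γ ∈ (0,1], the quantity T'^{,η} = (K - Γ)(H_K - H_η) / ((K - η) + α(η + K(H_K - H_η - 1))) is strictly decreasing in η. -/
open Finset

/-- `T'^{,η} = (K-Γ)(H_K - H_η)/((K-η) + α(η + K(H_K - H_η - 1)))`. -/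
noncomputable def Tprime (K : ℕ) (Γ α : ℝ) (η : ℕ) : ℝ :=
  ((K : ℝ) - Γ) * (H K - H η) /
    (((K : ℝ) - η) + α * ((η : ℝ) + K * (H K - H η - 1)))

lemma H_diff_eq (m n : ℕ) (h : m ≤ n) :
    H n - H m = ∑ i ∈ Finset.Ico m n, (1 : ℝ) / (i + 1) := by
  rw [H, H, eq_comm, Finset.sum_Ico_eq_sub _ h]

lemma H_diff_pos (m n : ℕ) (h : m < n) : 0 < H n - H m := by
  rw [H_diff_eq m n h.le]
  apply Finset.sum_pos
  · intro i _; positivity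
  · exact ⟨m, by simp [h]⟩

lemma H_diff_lower (m n : ℕ) (h : m ≤ n) (hn : 0 < n) :
    ((n : ℝ) - m) ≤ n * (H n - H m) := by
  rw [H_diff_eq m n h]
  have hn0 : (0:ℝ) < n := by exact_mod_cast hn
  have hs : ∑ i ∈ Finset.Ico m n, (1:ℝ)/n ≤ ∑ i ∈ Finset.Ico m n, (1:ℝ)/(i+1) := by
    apply Finset.sum_le_sum
    intro i hi
    simp only [Finset.mem_Ico] at hi
    have h2 : (0:ℝ) < (i:ℝ) + 1 := by positivity
    have h3 : (i:ℝ) + 1 ≤ n := by exact_mod_cast hi.2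
    exact one_div_le_one_div_of_le h2 h3
  have hc : ∑ i ∈ Finset.Ico m n, (1:ℝ)/n = ((n:ℝ)-m)/n := by
    rw [Finset.sum_const, Nat.card_Ico, nsmul_eq_mul, Nat.cast_sub h]
    ring
  rw [hc] at hs
  have h4 := mul_le_mul_of_nonneg_left hs hn0.le
  have h5 : (n:ℝ) * (((n:ℝ)-m)/n) = (n:ℝ) - m := by field_simp
  linarith

lemma H_diff_upper (m n : ℕ) (h : m + 2 ≤ n) :
    ((m : ℝ) + 1) * (H n - H m) < (n : ℝ) - m := by
  rw [H_diff_eq m n (by omega)]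
  have hm1 : (0:ℝ) < (m:ℝ) + 1 := by positivity
  have hs : ∑ i ∈ Finset.Ico m n, (1:ℝ)/(i+1) < ∑ i ∈ Finset.Ico m n, (1:ℝ)/(m+1) := by
    apply Finset.sum_lt_sum
    · intro i hi
      simp only [Finset.mem_Ico] at hi
      have h3 : (m:ℝ) + 1 ≤ (i:ℝ) + 1 := by
        have : (m:ℝ) ≤ i := by exact_mod_cast hi.1
        linarith
      exact one_div_le_one_div_of_le hm1 h3
    · refine ⟨m + 1, by simp only [Finset.mem_Ico]; omega, ?_⟩
      apply one_div_lt_one_div_of_lt hm1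
      push_cast; linarith
  have hc : ∑ i ∈ Finset.Ico m n, (1:ℝ)/(m+1) = ((n:ℝ)-m)/((m:ℝ)+1) := by
    rw [Finset.sum_const, Nat.card_Ico, nsmul_eq_mul, Nat.cast_sub (by omega)]
    ring
  rw [hc] at hs
  have h4 := mul_lt_mul_of_pos_left hs hm1
  have h5 : ((m:ℝ)+1) * (((n:ℝ)-m)/((m:ℝ)+1)) = (n:ℝ) - m := by field_simp
  linarith

set_option maxHeartbeats 1600000 in
lemma Tprime_step (K : ℕ) (hK : 3 ≤ K) (Γ α : ℝ)
    (hΓ1 : Γ ≤ 1) (hα0 : 0 ≤ α) (hα1 : α < 1)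
    (η : ℕ) (hη : η + 3 ≤ K) :
    Tprime K Γ α (η + 1) < Tprime K Γ α η := by
  set a := H K - H η with ha_def
  set b := H K - H (η + 1) with hb_def
  have hb_eq : b = a - 1 / ((η:ℝ) + 1) := by
    have : H (η + 1) = H η + 1 / ((η:ℝ) + 1) := by
      rw [H, Finset.sum_range_succ, ← H]
    rw [hb_def, ha_def, this]; ring
  have hb : 0 < b := H_diff_pos (η + 1) K (by omega)
  have ha : 0 < a := H_diff_pos η K (by omega)
  have haK : ((K : ℝ) - η) ≤ K * a := H_diff_lower η K (by omega) (by omega)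
  have hbK : ((K : ℝ) - (η + 1)) ≤ K * b := by
    have h := H_diff_lower (η + 1) K (by omega) (by omega)
    rw [← hb_def] at h
    push_cast at h ⊢; linarith
  have hau : ((η:ℝ) + 1) * a < (K : ℝ) - η := H_diff_upper η K (by omega)
  have hc : (0:ℝ) < (K:ℝ) - Γ := by
    have : (3:ℝ) ≤ K := by exact_mod_cast hK
    linarith
  have hKη : (1:ℝ) ≤ (K:ℝ) - η := by
    have : (η:ℝ) + 3 ≤ K := by exact_mod_cast hη
    linarith
  have hD : (0:ℝ) < ((K : ℝ) - η) + α * ((η : ℝ) + K * (a - 1)) := by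
    nlinarith [mul_nonneg hα0 (sub_nonneg.2 haK)]
  have hD' : (0:ℝ) < ((K : ℝ) - (η+1:ℕ)) + α * (((η+1:ℕ) : ℝ) + K * (b - 1)) := by
    push_cast
    nlinarith [mul_nonneg hα0 (sub_nonneg.2 hbK)]
  rw [Tprime, Tprime]
  rw [div_lt_div_iff₀ hD' hD]
  have hη1 : (0:ℝ) < (η:ℝ) + 1 := by positivity
  have key : ((η:ℝ) + 1) *
      (((K : ℝ) - Γ) * a * (((K : ℝ) - (η+1:ℕ)) + α * (((η+1:ℕ) : ℝ) + K * (b - 1)))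
       - ((K : ℝ) - Γ) * b * (((K : ℝ) - η) + α * ((η : ℝ) + K * (a - 1))))
      = ((K:ℝ) - Γ) * (1 - α) * (((K:ℝ) - η) - ((η:ℝ) + 1) * a) := by
    rw [hb_eq]
    push_cast
    field_simp
    ring
  have hpos : (0:ℝ) < ((K:ℝ) - Γ) * (1 - α) * (((K:ℝ) - η) - ((η:ℝ) + 1) * a) := by
    apply mul_pos (mul_pos hc (by linarith)) (by linarith)
  rw [show H K - H η = a from rfl, show H K - H (η+1) = b from rfl]
  nlinarith [key, hpos, hη1]

/-- For integers `η` with `Γ < η ≤ K-2`, `α ∈ [0,1)` and `Γ ∈ (0,1]`, the quantity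
`T'^{,η}` is strictly decreasing in `η`. -/
theorem Tprime_strictAnti (K : ℕ) (hK : 3 ≤ K) (Γ α : ℝ)
    (hΓ0 : 0 < Γ) (hΓ1 : Γ ≤ 1) (hα0 : 0 ≤ α) (hα1 : α < 1)
    (η₁ η₂ : ℕ) (hη₁ : Γ < (η₁ : ℝ)) (h12 : η₁ < η₂) (hη₂ : η₂ ≤ K - 2) :
    Tprime K Γ α η₂ < Tprime K Γ α η₁ := by
  have haux : ∀ d : ℕ, η₁ + 1 + d ≤ K - 2 →
      Tprime K Γ α (η₁ + 1 + d) < Tprime K Γ α η₁ := by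
    intro d
    induction d with
    | zero =>
      intro hd
      simpa using Tprime_step K hK Γ α hΓ1 hα0 hα1 η₁ (by omega)
    | succ n ih =>
      intro hd
      have h1 : Tprime K Γ α (η₁ + 1 + n + 1) < Tprime K Γ α (η₁ + 1 + n) :=
        Tprime_step K hK Γ α hΓ1 hα0 hα1 (η₁ + 1 + n) (by omega)
      have h2 := ih (by omega)
      calc Tprime K Γ α (η₁ + 1 + (n + 1)) = Tprime K Γ α (η₁ + 1 + n + 1) := by
            ring_nf
        _ < Tprime K Γ α (η₁ + 1 + n) := h1
        _ < Tprime K Γ α η₁ := h2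
  have hd : η₂ = η₁ + 1 + (η₂ - η₁ - 1) := by omega
  rw [hd]
  exact haux _ (by omega)
end
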